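/- arXiv:1706.01449 — 6 statements merged into one kernel-verified Lean document; each statement's English description precedes it below -/
import Mathlib

section
/- For nonzero vectors u, i ∈ ℝ^f and any angle θ_uc ∈ [0, π] with θ_uc an upper bound on the angle between u and their centroid direction, the inner product satisfies u · i ≤ ‖u‖ ‖i‖ · max_{θ ∈ [θ_ic − θ_uc, θ_ic + θ_uc]} cos θ, where θ_ic, θ_ui are angular distances and |θ_ic − θ_uc| ≤ θ_ui ≤ θ_ic + θ_uc. -/
open scoped RealInnerProductSpace

/-- Upper bound on the inner product via the supremum of cosine over the interval of
admissible angles given by the angular triangle inequality. -/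
theorem inner_le_norm_mul_norm_mul_sSup_cos {f : ℕ} (u i : EuclideanSpace ℝ (Fin f))
    (hu : u ≠ 0) (hi : i ≠ 0) (θic θuc : ℝ)
    (hic : θic ∈ Set.Icc 0 Real.pi) (huc : θuc ∈ Set.Icc 0 Real.pi)
    (htri : |θic - θuc| ≤ Real.arccos (⟪u, i⟫ / (‖u‖ * ‖i‖)) ∧
      Real.arccos (⟪u, i⟫ / (‖u‖ * ‖i‖)) ≤ θic + θuc) :
    ⟪u, i⟫ ≤ ‖u‖ * ‖i‖ * sSup (Real.cos '' Set.Icc (θic - θuc) (θic + θuc)) := by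
  set x : ℝ := ⟪u, i⟫ / (‖u‖ * ‖i‖) with hxdef
  have hun : (0:ℝ) < ‖u‖ := norm_pos_iff.mpr hu
  have hin : (0:ℝ) < ‖i‖ := norm_pos_iff.mpr hi
  have hprod : (0:ℝ) < ‖u‖ * ‖i‖ := mul_pos hun hin
  have hx1 : |x| ≤ 1 := by
    rw [hxdef, abs_div, abs_of_pos hprod, div_le_one hprod]
    exact abs_real_inner_le_norm u i
  have hxlo := abs_le.mp hx1
  have hmem : Real.arccos x ∈ Set.Icc (θic - θuc) (θic + θuc) := by
    constructor
    · exact le_trans (le_abs_self _) htri.1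
    · exact htri.2
  have hbdd : BddAbove (Real.cos '' Set.Icc (θic - θuc) (θic + θuc)) := by
    refine ⟨1, ?_⟩
    rintro y ⟨t, _, rfl⟩
    exact Real.cos_le_one t
  have hle : x ≤ sSup (Real.cos '' Set.Icc (θic - θuc) (θic + θuc)) := by
    have : Real.cos (Real.arccos x) = x := Real.cos_arccos hxlo.1 hxlo.2
    calc x = Real.cos (Real.arccos x) := this.symm
    _ ≤ _ := le_csSup hbdd ⟨Real.arccos x, hmem, rfl⟩
  have : ⟪u, i⟫ = ‖u‖ * ‖i‖ * x := by
    rw [hxdef]; field_simp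
  rw [this]
  exact mul_le_mul_of_nonneg_left hle hprod.le
end

section
/- (Upper bound in index lists) Let u, i, c be nonzero vectors in ℝ^f with θ_ui, θ_ic, θ_uc the pairwise angles, and let θ_b ∈ [0, π] satisfy θ_b ≥ θ_uc. Define r*_ci = ‖i‖·cos(θ_ic − θ_b) if θ_b < θ_ic and r*_ci = ‖i‖ otherwise. Then r*_ci ≥ (u · i)/‖u‖. -/
/-!
Write `⟪u, i⟫ / ‖u‖ = ‖i‖ cos θ_ui`. Since `cos ≤ 1`, the bound `‖i‖` always holds. When
`θ_b < θ_ic`, the triangle inequality for angles gives `θ_ic - θ_b ≤ θ_ic - θ_uc ≤ θ_ui`, and both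
ends lie in `[0, π]`, where the cosine is decreasing.
-/

open scoped RealInnerProductSpace

open InnerProductGeometry Real

section

variable {V : Type*} [NormedAddCommGroup V] [InnerProductSpace ℝ V]

theorem InnerProductGeometry.inner_div_norm_eq_norm_mul_cos_angle {x : V} (hx : x ≠ 0) (y : V) :
    ⟪x, y⟫ / ‖x‖ = ‖y‖ * cos (angle x y) := by
  rw [← cos_angle_mul_norm_mul_norm, div_eq_iff (norm_ne_zero_iff.mpr hx)]
  ring

theorem InnerProductGeometry.cos_angle_le_cos_angle_sub {x y z : V} {θ : ℝ}
    (hxz : angle x z ≤ θ) (hθ : θ ≤ angle y z) :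
    cos (angle x y) ≤ cos (angle y z - θ) := by
  have htri : angle y z ≤ angle y x + angle x z := angle_le_angle_add_angle y x z
  rw [angle_comm y x] at htri
  exact cos_le_cos_of_nonneg_of_le_pi (by linarith) (angle_le_pi x y) (by linarith)

end

theorem simdex_index_upper_bound_general {f : ℕ} (u i c : EuclideanSpace ℝ (Fin f))
    (hu : u ≠ 0) (θb : ℝ)
    (hbound : Real.arccos (⟪u, c⟫ / (‖u‖ * ‖c‖)) ≤ θb) :
    ⟪u, i⟫ / ‖u‖ ≤
      (if θb < Real.arccos (⟪i, c⟫ / (‖i‖ * ‖c‖)) then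
        ‖i‖ * Real.cos (Real.arccos (⟪i, c⟫ / (‖i‖ * ‖c‖)) - θb)
      else ‖i‖) := by
  change angle u c ≤ θb at hbound
  change _ ≤ if θb < angle i c then ‖i‖ * cos (angle i c - θb) else ‖i‖
  rw [inner_div_norm_eq_norm_mul_cos_angle hu]
  split_ifs with hθ
  · exact mul_le_mul_of_nonneg_left (cos_angle_le_cos_angle_sub hbound hθ.le) (norm_nonneg i)
  · exact mul_le_of_le_one_right (norm_nonneg i) (cos_le_one _)

/-- Upper bound in index lists (Lemma 2 of SimDex): the conservative centroid bound
dominates the scaled rating. -/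
theorem simdex_index_upper_bound {f : ℕ} (u i c : EuclideanSpace ℝ (Fin f))
    (hu : u ≠ 0) (hi : i ≠ 0) (hc : c ≠ 0) (θb : ℝ)
    (hb : θb ∈ Set.Icc 0 Real.pi)
    (hbound : Real.arccos (⟪u, c⟫ / (‖u‖ * ‖c‖)) ≤ θb) :
    ⟪u, i⟫ / ‖u‖ ≤
      (if θb < Real.arccos (⟪i, c⟫ / (‖i‖ * ‖c‖)) then
        ‖i‖ * Real.cos (Real.arccos (⟪i, c⟫ / (‖i‖ * ‖c‖)) - θb)
      else ‖i‖) :=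
  simdex_index_upper_bound_general u i c hu θb hbound
end

section
/- (Early termination correctness) Let L be a list of items sorted in descending order by upper bounds b(i), where each b(i) ≥ r(i) for a true rating function r. If the algorithm has examined a prefix P of L containing a set S of K items with min_{s∈S} r(s) > b(i*) for the current item i* at position |P|+1, then every item in L outside P has true rating strictly less than min_{s∈S} r(s); hence S is the exact top-K of L under r (assuming S consists of the K largest ratings within P). -/
theorem List.le_getElem_of_mem_drop_of_pairwise_ge {α β : Type*} [Preorder β] {L : List α}
    {b : α → β} (hsorted : (L.map b).Pairwise (· ≥ ·)) {m : ℕ} (hm : m < L.length) {i : α}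
    (hi : i ∈ L.drop m) : b i ≤ b L[m] := by
  have hdrop := List.drop_eq_getElem_cons hm
  have hsorted_drop : (L.drop m).Pairwise (fun x y => b x ≥ b y) :=
    (List.pairwise_map.mp hsorted).sublist (List.drop_sublist m L)
  rw [hdrop, List.pairwise_cons] at hsorted_drop
  rw [hdrop, List.mem_cons] at hi
  rcases hi with rfl | hi
  · exact le_rfl
  · exact hsorted_drop.1 i hi

theorem List.lt_of_mem_drop_of_bound_lt {α β : Type*} [Preorder β] {L : List α} {r b : α → β}
    (hb : ∀ i, r i ≤ b i) (hsorted : (L.map b).Pairwise (· ≥ ·)) {m : ℕ} (hm : m < L.length)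
    {i : α} (hi : i ∈ L.drop m) {t : β} (ht : b L[m] < t) : r i < t :=
  (hb i).trans_lt ((List.le_getElem_of_mem_drop_of_pairwise_ge hsorted hm hi).trans_lt ht)

theorem List.mem_take_or_mem_drop {α : Type*} {L : List α} {i : α} (m : ℕ) (hi : i ∈ L) :
    i ∈ L.take m ∨ i ∈ L.drop m := by
  rw [← List.take_append_drop m L, List.mem_append] at hi
  exact hi

theorem early_termination_correct_general {α : Type*} (L : List α) (r b : α → ℝ)
    (hb : ∀ i, r i ≤ b i)
    (hsorted : (L.map b).Pairwise (· ≥ ·))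
    (m : ℕ) (hm : m < L.length)
    (S : Finset α)
    (hStop : ∀ i ∈ L.take m, i ∉ S → ∀ s ∈ S, r i ≤ r s)
    (hterm : ∀ s ∈ S, b (L.get ⟨m, hm⟩) < r s) :
    (∀ i ∈ L.drop m, ∀ s ∈ S, r i < r s) ∧
      (∀ i ∈ L, i ∉ S → ∀ s ∈ S, r i ≤ r s) := by
  have unvisited_lt : ∀ i ∈ L.drop m, ∀ s ∈ S, r i < r s := fun i hi s hs =>
    List.lt_of_mem_drop_of_bound_lt hb hsorted hm hi (hterm s hs)
  refine ⟨unvisited_lt, fun i hi hiS s hs => ?_⟩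
  rcases List.mem_take_or_mem_drop m hi with hi | hi
  · exact hStop i hi hiS s hs
  · exact (unvisited_lt i hi s hs).le

/-- Early termination correctness: if the heap's minimum true rating strictly exceeds
the bound of the next unvisited item, all unvisited items have strictly smaller true
ratings, and `S` is an exact top-K of the whole list. -/
theorem early_termination_correct {α : Type*} (L : List α) (r b : α → ℝ)
    (hb : ∀ i, r i ≤ b i)
    (hsorted : (L.map b).Pairwise (· ≥ ·))
    (m K : ℕ) (hm : m < L.length)
    (S : Finset α)
    (hScard : S.card = K)
    (hSsub : ∀ s ∈ S, s ∈ L.take m)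
    (hStop : ∀ i ∈ L.take m, i ∉ S → ∀ s ∈ S, r i ≤ r s)
    (hterm : ∀ s ∈ S, b (L.get ⟨m, hm⟩) < r s) :
    (∀ i ∈ L.drop m, ∀ s ∈ S, r i < r s) ∧
      (∀ i ∈ L, i ∉ S → ∀ s ∈ S, r i ≤ r s) :=
  early_termination_correct_general L r b hb hsorted m hm S hStop hterm
end

section
/- (Exactness of SimDex index, K = 1 case) Let items be enumerated in a list L sorted in descending order by upper bounds b with b(i) ≥ r(i) for all items i. Suppose the traversal returns item i_w after stopping at the first position m where the current best true rating r(i_w) exceeds b(L[m]) (i_w being the argmax of r over L[0..m−1]). Then r(i_w) = max over all items i in L of r(i). -/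
theorem List.le_getElem_of_mem_drop_of_pairwise_map_ge {α β : Type*} [Preorder β]
    {L : List α} {b : α → β} (hsorted : (L.map b).Pairwise (· ≥ ·)) {m : ℕ}
    (hm : m < L.length) : ∀ i ∈ L.drop m, b i ≤ b L[m] := by
  rw [List.pairwise_map] at hsorted
  have hdrop := hsorted.drop (i := m)
  rw [List.drop_eq_getElem_cons hm, List.pairwise_cons] at hdrop
  rw [List.drop_eq_getElem_cons hm]
  rintro i (_ | ⟨_, hi⟩)
  · exact le_rfl
  · exact hdrop.1 i hi

theorem simdex_top1_exact_general {α : Type*} (L : List α) (r b : α → ℝ)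
    (hb : ∀ i, r i ≤ b i)
    (hsorted : (L.map b).Pairwise (· ≥ ·))
    (m : ℕ) (hm : m < L.length)
    (iw : α)
    (hmax : ∀ i ∈ L.take m, r i ≤ r iw)
    (hstop : b (L.get ⟨m, hm⟩) < r iw) :
    ∀ i ∈ L, r i ≤ r iw := by
  intro i hi
  rw [← List.take_append_drop m L, List.mem_append] at hi
  rcases hi with hhead | htail
  · exact hmax i hhead
  · calc r i ≤ b i := hb i
      _ ≤ b L[m] := List.le_getElem_of_mem_drop_of_pairwise_map_ge hsorted hm i htail
      _ ≤ r iw := hstop.le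

/-- Exactness of SimDex index traversal for K = 1: the item returned when the traversal
stops has the maximum true rating over the whole list. -/
theorem simdex_top1_exact {α : Type*} (L : List α) (r b : α → ℝ)
    (hb : ∀ i, r i ≤ b i)
    (hsorted : (L.map b).Pairwise (· ≥ ·))
    (m : ℕ) (hm : m < L.length)
    (iw : α) (hiw : iw ∈ L.take m)
    (hmax : ∀ i ∈ L.take m, r i ≤ r iw)
    (hstop : b (L.get ⟨m, hm⟩) < r iw) :
    ∀ i ∈ L, r i ≤ r iw :=
  simdex_top1_exact_general L r b hb hsorted m hm iw hmax hstop
end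

section
/- If θ_b ≥ θ_uc for every user u assigned to centroid c (θ_b chosen as the maximum user–centroid angle over the cluster), then for all such users u and all items i, the cluster-level bound r*_ci ≥ (u · i)/‖u‖; consequently, an item i whose bound r*_ci is less than the K-th largest true scaled rating of user u cannot be in u's exact top-K. -/
open scoped RealInnerProductSpace

open InnerProductGeometry in
/-- Key inner product bound underlying the spherical triangle inequality. -/
lemma inner_ge_cos_add {V : Type*} [NormedAddCommGroup V] [InnerProductSpace ℝ V]
    (x y z : V) (hy : y ≠ 0) :
    ‖x‖ * ‖z‖ * Real.cos (angle x y + angle y z) ≤ ⟪x, z⟫ := by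
  set N : ℝ := ‖y‖ ^ 2 with hN
  have hy' : 0 < ‖y‖ := norm_pos_iff.mpr hy
  have hNpos : 0 < N := by positivity
  set x' : V := x - (⟪x, y⟫ / N) • y with hx'
  set z' : V := z - (⟪z, y⟫ / N) • y with hz'
  have hyy : ⟪y, y⟫ = N := by rw [real_inner_self_eq_norm_sq]
  have hinner : ⟪x', z'⟫ = ⟪x, z⟫ - ⟪x, y⟫ * ⟪z, y⟫ / N := by
    simp only [hx', hz', inner_sub_left, inner_sub_right, real_inner_smul_left,
      real_inner_smul_right, hyy]
    rw [real_inner_comm y z]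
    field_simp
    try ring
  have hxsq : ‖x'‖ ^ 2 = ‖x‖ ^ 2 - ⟪x, y⟫ ^ 2 / N := by
    rw [← real_inner_self_eq_norm_sq, ← real_inner_self_eq_norm_sq]
    simp only [hx', inner_sub_left, inner_sub_right, real_inner_smul_left,
      real_inner_smul_right, hyy]
    rw [real_inner_comm y x]
    field_simp
    try ring
  have hzsq : ‖z'‖ ^ 2 = ‖z‖ ^ 2 - ⟪z, y⟫ ^ 2 / N := by
    rw [← real_inner_self_eq_norm_sq, ← real_inner_self_eq_norm_sq]
    simp only [hz', inner_sub_left, inner_sub_right, real_inner_smul_left,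
      real_inner_smul_right, hyy]
    rw [real_inner_comm y z]
    field_simp
    try ring
  -- sin angle * norms = sqrt (N * ‖x'‖²)
  have hsinx : Real.sin (angle x y) * (‖x‖ * ‖y‖) = Real.sqrt N * ‖x'‖ := by
    rw [sin_angle_mul_norm_mul_norm, ← Real.sqrt_sq (norm_nonneg x'), ← Real.sqrt_mul hNpos.le]
    congr 1
    rw [hxsq, real_inner_self_eq_norm_sq, real_inner_self_eq_norm_sq]
    field_simp
    try ring
  have hsinz : Real.sin (angle y z) * (‖y‖ * ‖z‖) = Real.sqrt N * ‖z'‖ := by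
    rw [sin_angle_mul_norm_mul_norm, ← Real.sqrt_sq (norm_nonneg z'), ← Real.sqrt_mul hNpos.le]
    congr 1
    rw [hzsq, real_inner_self_eq_norm_sq, real_inner_self_eq_norm_sq, real_inner_comm y z]
    field_simp
    try ring
  have hcosx : Real.cos (angle x y) * (‖x‖ * ‖y‖) = ⟪x, y⟫ := cos_angle_mul_norm_mul_norm x y
  have hcosz : Real.cos (angle y z) * (‖y‖ * ‖z‖) = ⟪y, z⟫ := cos_angle_mul_norm_mul_norm y z
  have hsqN : Real.sqrt N * Real.sqrt N = N := Real.mul_self_sqrt hNpos.le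
  -- Cauchy–Schwarz
  have hcs : -(‖x'‖ * ‖z'‖) ≤ ⟪x', z'⟫ := neg_le_of_abs_le (abs_real_inner_le_norm x' z')
  have key : ‖x‖ * ‖z‖ * Real.cos (angle x y + angle y z) * N ≤ ⟪x, z⟫ * N := by
    have expand : ‖x‖ * ‖z‖ * Real.cos (angle x y + angle y z) * N =
        (Real.cos (angle x y) * (‖x‖ * ‖y‖)) * (Real.cos (angle y z) * (‖y‖ * ‖z‖)) -
          (Real.sin (angle x y) * (‖x‖ * ‖y‖)) * (Real.sin (angle y z) * (‖y‖ * ‖z‖)) := by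
      rw [Real.cos_add, hN]
      ring
    rw [expand, hcosx, hcosz, hsinx, hsinz]
    have h1 : Real.sqrt N * ‖x'‖ * (Real.sqrt N * ‖z'‖) = N * (‖x'‖ * ‖z'‖) := by
      rw [show Real.sqrt N * ‖x'‖ * (Real.sqrt N * ‖z'‖)
            = Real.sqrt N * Real.sqrt N * (‖x'‖ * ‖z'‖) by ring, hsqN]
    have h2 : -(N * (‖x'‖ * ‖z'‖)) ≤ N * ⟪x', z'⟫ := by
      rw [← mul_neg]
      exact mul_le_mul_of_nonneg_left hcs hNpos.le
    have h3 : ⟪x, y⟫ * ⟪y, z⟫ - N * (‖x'‖ * ‖z'‖) ≤ ⟪x, y⟫ * ⟪y, z⟫ + N * ⟪x', z'⟫ := by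
      linarith
    rw [h1]
    calc ⟪x, y⟫ * ⟪y, z⟫ - N * (‖x'‖ * ‖z'‖)
        ≤ ⟪x, y⟫ * ⟪y, z⟫ + N * ⟪x', z'⟫ := h3
      _ = ⟪x, z⟫ * N := by
          rw [hinner, real_inner_comm y z]
          field_simp
          try ring
  exact le_of_mul_le_mul_right key hNpos

open InnerProductGeometry in
/-- The spherical triangle inequality for angles between vectors. -/
lemma angle_triangle' {V : Type*} [NormedAddCommGroup V] [InnerProductSpace ℝ V]
    (x y z : V) (hx : x ≠ 0) (hy : y ≠ 0) (hz : z ≠ 0) :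
    angle x z ≤ angle x y + angle y z := by
  by_cases hpi : Real.pi ≤ angle x y + angle y z
  · exact (angle_le_pi x z).trans hpi
  push_neg at hpi
  have hsum0 : 0 ≤ angle x y + angle y z :=
    add_nonneg (angle_nonneg x y) (angle_nonneg y z)
  have hkey : ‖x‖ * ‖z‖ * Real.cos (angle x y + angle y z) ≤ ⟪x, z⟫ :=
    inner_ge_cos_add x y z hy
  have hx' : 0 < ‖x‖ := norm_pos_iff.mpr hx
  have hz' : 0 < ‖z‖ := norm_pos_iff.mpr hz
  have hxz : 0 < ‖x‖ * ‖z‖ := by positivity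
  have hcosle : Real.cos (angle x y + angle y z) ≤ ⟪x, z⟫ / (‖x‖ * ‖z‖) := by
    rw [le_div_iff₀ hxz]; linarith [hkey]
  have harc : ∀ p q : ℝ, p ≤ q → Real.arccos q ≤ Real.arccos p := fun p q h => by
    unfold Real.arccos
    linarith [Real.monotone_arcsin h]
  calc angle x z = Real.arccos (⟪x, z⟫ / (‖x‖ * ‖z‖)) := rfl
    _ ≤ Real.arccos (Real.cos (angle x y + angle y z)) := harc _ _ hcosle
    _ = angle x y + angle y z := Real.arccos_cos hsum0 hpi.le

/-- If `θb` upper-bounds the user-centroid angle of every user in the cluster, then the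
cluster-level bound dominates every user's scaled rating; consequently an item whose
bound is strictly below every rating in a user's top-K set cannot belong to that set. -/
theorem simdex_cluster_bound_prunes {f : ℕ}
    (U : Finset (EuclideanSpace ℝ (Fin f))) (c : EuclideanSpace ℝ (Fin f))
    (hc : c ≠ 0) (hU : ∀ u ∈ U, u ≠ 0) (θb : ℝ) (hbmem : θb ∈ Set.Icc 0 Real.pi)
    (hθb : ∀ u ∈ U, Real.arccos (⟪u, c⟫ / (‖u‖ * ‖c‖)) ≤ θb) :
    (∀ u ∈ U, ∀ i : EuclideanSpace ℝ (Fin f), i ≠ 0 →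
        ⟪u, i⟫ / ‖u‖ ≤
          (if θb < Real.arccos (⟪i, c⟫ / (‖i‖ * ‖c‖)) then
            ‖i‖ * Real.cos (Real.arccos (⟪i, c⟫ / (‖i‖ * ‖c‖)) - θb)
          else ‖i‖)) ∧
      (∀ u ∈ U, ∀ (I T : Finset (EuclideanSpace ℝ (Fin f))) (K : ℕ),
        (∀ i ∈ I, i ≠ 0) → T ⊆ I → T.card = K →
        (∀ j ∈ T, ∀ i ∈ I, i ∉ T → ⟪u, i⟫ / ‖u‖ ≤ ⟪u, j⟫ / ‖u‖) →
        ∀ i ∈ I,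
          (∀ j ∈ T,
            (if θb < Real.arccos (⟪i, c⟫ / (‖i‖ * ‖c‖)) then
              ‖i‖ * Real.cos (Real.arccos (⟪i, c⟫ / (‖i‖ * ‖c‖)) - θb)
            else ‖i‖) < ⟪u, j⟫ / ‖u‖) →
          i ∉ T) := by
  have main : ∀ u ∈ U, ∀ i : EuclideanSpace ℝ (Fin f), i ≠ 0 →
      ⟪u, i⟫ / ‖u‖ ≤
        (if θb < Real.arccos (⟪i, c⟫ / (‖i‖ * ‖c‖)) then
          ‖i‖ * Real.cos (Real.arccos (⟪i, c⟫ / (‖i‖ * ‖c‖)) - θb)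
        else ‖i‖) := by
    intro u hu i hi
    have hune : u ≠ 0 := hU u hu
    have hupos : (0 : ℝ) < ‖u‖ := norm_pos_iff.mpr hune
    have hic : Real.arccos (⟪i, c⟫ / (‖i‖ * ‖c‖)) = InnerProductGeometry.angle i c := rfl
    have huc : Real.arccos (⟪u, c⟫ / (‖u‖ * ‖c‖)) = InnerProductGeometry.angle u c := rfl
    by_cases hcase : θb < Real.arccos (⟪i, c⟫ / (‖i‖ * ‖c‖))
    · rw [if_pos hcase]
      set θi := Real.arccos (⟪i, c⟫ / (‖i‖ * ‖c‖)) with hθi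
      -- triangle inequality: angle i c ≤ angle i u + angle u c
      have htri : θi ≤ InnerProductGeometry.angle i u + InnerProductGeometry.angle u c :=
        hic ▸ angle_triangle' i u c hi hune hc
      have hucb : InnerProductGeometry.angle u c ≤ θb := huc ▸ hθb u hu
      have hlb : θi - θb ≤ InnerProductGeometry.angle i u := by linarith
      have h0 : 0 ≤ θi - θb := by linarith
      have hcos : Real.cos (InnerProductGeometry.angle i u) ≤ Real.cos (θi - θb) :=
        Real.cos_le_cos_of_nonneg_of_le_pi h0 (InnerProductGeometry.angle_le_pi i u) hlb
      have hval : ⟪u, i⟫ / ‖u‖ = ‖i‖ * Real.cos (InnerProductGeometry.angle i u) := by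
        have h := InnerProductGeometry.cos_angle_mul_norm_mul_norm i u
        rw [div_eq_iff hupos.ne', real_inner_comm i u, ← h]
        ring
      rw [hval]
      exact mul_le_mul_of_nonneg_left hcos (norm_nonneg i)
    · rw [if_neg hcase]
      rw [div_le_iff₀ hupos]
      calc ⟪u, i⟫ ≤ ‖u‖ * ‖i‖ := real_inner_le_norm u i
        _ = ‖i‖ * ‖u‖ := by ring
  refine ⟨main, ?_⟩
  intro u hu I T K hI hTI hK htop i hiI hlt hiT
  exact absurd (main u hu i (hI i hiI)) (not_le.mpr (hlt i hiT))
end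

section
/- (Theorem: exactness of SimDex index) Let I be a finite set of items, u a user with true scaled rating r(i) = (u·i)/‖u‖, and L an enumeration of I sorted descending by bounds b(i) satisfying b(i) ≥ r(i) for all i. The top-K algorithm that maintains a min-heap of the K best true ratings seen so far and terminates at the first unvisited position whose bound is strictly below the heap minimum returns exactly a set I' ⊆ I of size K such that for all i ∈ I \ I' and all j ∈ I', r(i) ≤ r(j). -/
open scoped RealInnerProductSpace

namespace List

variable {α β : Type*} [Preorder β]

theorem le_getElem_of_mem_drop_of_pairwise_ge_s19 (b : α → β) {L : List α}
    (hsorted : (L.map b).Pairwise (· ≥ ·)) {m : ℕ} (hm : m < L.length) {i : α}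
    (hi : i ∈ L.drop m) : b i ≤ b L[m] := by
  have htail : ((L[m] :: L.drop (m + 1)).map b).Pairwise (· ≥ ·) := by
    rw [← drop_eq_getElem_cons hm, map_drop]
    exact hsorted.sublist (drop_sublist m _)
  rw [drop_eq_getElem_cons hm, mem_cons] at hi
  rcases hi with rfl | hi
  · exact le_rfl
  · exact (pairwise_cons.mp htail).1 (b i) (mem_map_of_mem hi)

theorem forall_le_of_take_of_bound_lt (r b : α → β) {L : List α}
    (hb : ∀ i ∈ L, r i ≤ b i) (hsorted : (L.map b).Pairwise (· ≥ ·)) {m : ℕ} {S : Set α}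
    (hprefix : ∀ i ∈ L.take m, i ∉ S → ∀ j ∈ S, r i ≤ r j)
    (hstop : ∀ h : m < L.length, ∀ j ∈ S, b L[m] < r j) :
    ∀ i ∈ L, i ∉ S → ∀ j ∈ S, r i ≤ r j := by
  intro i hi hiS j hj
  rw [← take_append_drop m L, mem_append] at hi
  rcases hi with hi | hi
  · exact hprefix i hi hiS j hj
  · have hm : m < L.length := by
      by_contra! h
      simp [drop_eq_nil_of_le h] at hi
    calc r i ≤ b i := hb i (mem_of_mem_drop hi)
      _ ≤ b L[m] := le_getElem_of_mem_drop_of_pairwise_ge_s19 b hsorted hm hi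
      _ ≤ r j := (hstop hm j hj).le

end List

theorem simdex_index_exact_topK_general {f : ℕ} (u : EuclideanSpace ℝ (Fin f))
    (L : List (EuclideanSpace ℝ (Fin f)))
    (b : EuclideanSpace ℝ (Fin f) → ℝ)
    (hb : ∀ i ∈ L, ⟪u, i⟫ / ‖u‖ ≤ b i)
    (hsorted : (L.map b).Pairwise (· ≥ ·))
    (m : ℕ)
    (I' : Finset (EuclideanSpace ℝ (Fin f)))
    (hheap : ∀ i ∈ L.take m, i ∉ I' → ∀ j ∈ I', ⟪u, i⟫ / ‖u‖ ≤ ⟪u, j⟫ / ‖u‖)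
    (hstop : ∀ (h : m < L.length), ∀ j ∈ I', b (L.get ⟨m, h⟩) < ⟪u, j⟫ / ‖u‖) :
    ∀ i ∈ L, i ∉ I' → ∀ j ∈ I', ⟪u, i⟫ / ‖u‖ ≤ ⟪u, j⟫ / ‖u‖ :=
  L.forall_le_of_take_of_bound_lt (fun i ↦ ⟪u, i⟫ / ‖u‖) b hb hsorted (S := ↑I') hheap hstop

/-- Exactness of the SimDex index (Theorem 1): the heap-based traversal over a list
sorted descending by valid per-item upper bounds, terminating when the heap minimum
strictly exceeds the next bound, returns an exact top-K set. -/
theorem simdex_index_exact_topK {f : ℕ} (u : EuclideanSpace ℝ (Fin f)) (hu : u ≠ 0)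
    (L : List (EuclideanSpace ℝ (Fin f))) (hnodup : L.Nodup)
    (b : EuclideanSpace ℝ (Fin f) → ℝ)
    (hb : ∀ i ∈ L, ⟪u, i⟫ / ‖u‖ ≤ b i)
    (hsorted : (L.map b).Pairwise (· ≥ ·))
    (K m : ℕ) (hKm : K ≤ m) (hmL : m ≤ L.length)
    (I' : Finset (EuclideanSpace ℝ (Fin f)))
    (hcard : I'.card = K)
    (hsub : ∀ j ∈ I', j ∈ L.take m)
    (hheap : ∀ i ∈ L.take m, i ∉ I' → ∀ j ∈ I', ⟪u, i⟫ / ‖u‖ ≤ ⟪u, j⟫ / ‖u‖)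
    (hstop : ∀ (h : m < L.length), ∀ j ∈ I', b (L.get ⟨m, h⟩) < ⟪u, j⟫ / ‖u‖) :
    ∀ i ∈ L, i ∉ I' → ∀ j ∈ I', ⟪u, i⟫ / ‖u‖ ≤ ⟪u, j⟫ / ‖u‖ :=
  simdex_index_exact_topK_general u L b hb hsorted m I' hheap hstop
end
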